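/- For every ε ∈ (0,1/32), every process on I_ε with Σ_{i ∈ I_ε} p_i^1 = 1, and every step t: if δ_{−,+}^t ≥ (1/(2B_ε)) · Σ_{j ∈ I_ε⁺} p_j^t and W_t ≥ 16 · ε · B_ε, then W_{t+1} ≤ (1 − 1/(9B_ε)) · W_t. -/

import Mathlib

/-!
The mass crossing from `-1` to `+1` is at least `S/(2B)`, where `S = Σ_{I⁺} p`; so site `-1` is
heavy, condition (ii) applies there, and `p_{-1} ≥ 8S/B`. The weight `p_{-1}/2` of site `-1` in `W`
drops to at most `3p_{-1}/16`, a gain of order `S/B`, while positive sites never increase `W`.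
A heavy site `j ≤ -3` sends `15/16` of its mass to `j - 2`, which halves its contribution to `W`;
light sites contribute at most `S/B⁴` each and the boundary site `-B` at most `4·2^{-B} ≤ 2ε²`.
Since `W_t ≥ 16εB`, these errors are absorbed and `W` contracts by the factor `1 - 1/(9B)`.
-/

/-- `B_ε := 2⌈log₂(1/ε)⌉ + 1`. -/
noncomputable def Bval (ε : ℝ) : ℤ := 2 * ⌈Real.logb 2 (1 / ε)⌉ + 1

/-- `I_ε`: the odd integers `i` with `-B_ε ≤ i ≤ B_ε`. -/
noncomputable def Iset (ε : ℝ) : Finset ℤ :=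
  (Finset.Icc (-(Bval ε)) (Bval ε)).filter (fun i => Odd i)

/-- `I_ε⁺ := I_ε ∩ {i > 0}`. -/
noncomputable def Ipos (ε : ℝ) : Finset ℤ := (Iset ε).filter (fun i => 0 < i)

/-- `I_ε⁻ := I_ε ∩ {i < 0}`. -/
noncomputable def Ineg (ε : ℝ) : Finset ℤ := (Iset ε).filter (fun i => i < 0)

/-- A process on `I_ε` (Definition 4 of the paper): at each step `t ≥ 1` and each `i ∈ I_ε`,
an amount `q t i` with `0 ≤ q t i ≤ p t i` of the weight `p t i` moves to position `i - 2`
and the remaining `p t i - q t i` moves to position `i + 2`, clamped to stay in `[-B_ε, B_ε]`;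
`p (t+1) i` is the total weight arriving at `i`.  Moreover:
(i) at every step at least `15/16` of the mass on `I_ε⁺` moves down, and
(ii) for every `i ∈ I_ε⁻` whose mass is at least `(1/B_ε⁴) Σ_{j ∈ I_ε⁺} p t j`,
at most `1/16` of the weight at `i` moves up. -/
structure MProcess (ε : ℝ) where
  p : ℕ → ℤ → ℝ
  q : ℕ → ℤ → ℝ
  q_nonneg : ∀ t i, 0 ≤ q t i
  q_le_p : ∀ t i, q t i ≤ p t i
  update : ∀ t, 1 ≤ t → ∀ i ∈ Iset ε,
    p (t + 1) i =
      (∑ j ∈ (Iset ε).filter (fun j => max (j - 2) (-(Bval ε)) = i), q t j) +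
      (∑ j ∈ (Iset ε).filter (fun j => min (j + 2) (Bval ε) = i), (p t j - q t j))
  mass_down : ∀ t, 1 ≤ t →
    (15 / 16 : ℝ) * ∑ i ∈ Ipos ε, p t i ≤ ∑ i ∈ Ipos ε, q t i
  up_small : ∀ t, 1 ≤ t → ∀ i ∈ Ineg ε,
    (1 / (Bval ε : ℝ) ^ 4) * (∑ j ∈ Ipos ε, p t j) ≤ p t i →
    p t i - q t i ≤ (1 / 16 : ℝ) * p t i

/-- `W_t := Σ_{i ∈ I_ε⁻} 2^i p_i^t + Σ_{i ∈ I_ε⁺} p_i^t`. -/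
noncomputable def Wfun (ε : ℝ) (P : MProcess ε) (t : ℕ) : ℝ :=
  (∑ i ∈ Ineg ε, (2 : ℝ) ^ i * P.p t i) + ∑ i ∈ Ipos ε, P.p t i

open Finset

lemma Bval_odd (ε : ℝ) : Odd (Bval ε) := ⟨⌈Real.logb 2 (1 / ε)⌉, rfl⟩

lemma thirteen_le_Bval {ε : ℝ} (hε0 : 0 < ε) (hε : ε < 1 / 32) : 13 ≤ Bval ε := by
  have hlog : 5 < Real.logb 2 (1 / ε) := by
    rw [Real.lt_logb_iff_rpow_lt (by norm_num) (by positivity), lt_div_iff₀ hε0]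
    norm_num
    linarith
  have : (5 : ℤ) < ⌈Real.logb 2 (1 / ε)⌉ := Int.lt_ceil.2 (by exact_mod_cast hlog)
  unfold Bval
  omega

lemma two_zpow_neg_Bval_le {ε : ℝ} (hε0 : 0 < ε) : (2 : ℝ) ^ (-Bval ε) ≤ ε ^ 2 / 2 := by
  set c := ⌈Real.logb 2 (1 / ε)⌉
  have hc : 1 ≤ (2 : ℝ) ^ c * ε := by
    have h := Real.rpow_le_rpow_of_exponent_le (x := 2) (by norm_num)
      (Int.le_ceil (Real.logb 2 (1 / ε)))
    rw [Real.rpow_logb (by norm_num) (by norm_num) (by positivity), Real.rpow_intCast,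
      div_le_iff₀ hε0] at h
    exact h
  have hB : (2 : ℝ) ^ Bval ε = 2 * ((2 : ℝ) ^ c) ^ 2 := by
    rw [Bval, zpow_add_one₀ two_ne_zero, two_mul, zpow_add₀ two_ne_zero]
    ring
  rw [zpow_neg, hB, inv_le_iff_one_le_mul₀ (by positivity)]
  nlinarith

lemma mem_Iset {ε : ℝ} {i : ℤ} : i ∈ Iset ε ↔ (-Bval ε ≤ i ∧ i ≤ Bval ε) ∧ Odd i := by
  simp [Iset]

lemma max_sub_two_mem_Iset {ε : ℝ} {j : ℤ} (hj : j ∈ Iset ε) :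
    max (j - 2) (-Bval ε) ∈ Iset ε := by
  obtain ⟨⟨h1, h2⟩, m, rfl⟩ := mem_Iset.1 hj
  refine mem_Iset.2 ⟨⟨le_max_right _ _, max_le (by omega) (by omega)⟩, ?_⟩
  rcases max_choice (2 * m + 1 - 2) (-Bval ε) with h | h <;> rw [h]
  · exact ⟨m - 1, by ring⟩
  · exact (Bval_odd ε).neg

lemma min_add_two_mem_Iset {ε : ℝ} {j : ℤ} (hj : j ∈ Iset ε) :
    min (j + 2) (Bval ε) ∈ Iset ε := by
  obtain ⟨⟨h1, h2⟩, m, rfl⟩ := mem_Iset.1 hj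
  refine mem_Iset.2 ⟨⟨le_min (by omega) (by omega), min_le_right _ _⟩, ?_⟩
  rcases min_choice (2 * m + 1 + 2) (Bval ε) with h | h <;> rw [h]
  · exact ⟨m + 1, by ring⟩
  · exact Bval_odd ε

lemma sum_Iset_eq_sum_Ineg_add_sum_Ipos {ε : ℝ} (g : ℤ → ℝ) :
    ∑ i ∈ Iset ε, g i = ∑ i ∈ Ineg ε, g i + ∑ i ∈ Ipos ε, g i := by
  rw [Ineg, Ipos, ← sum_filter_add_sum_filter_not (Iset ε) (· < 0)]
  congr 1
  refine sum_congr (filter_congr fun i hi => ?_) fun _ _ => rfl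
  obtain ⟨-, m, rfl⟩ := mem_Iset.1 hi
  omega

lemma card_Ineg_le {ε : ℝ} (hB : 0 ≤ Bval ε) : ((Ineg ε).card : ℝ) ≤ Bval ε := by
  have hsub : Ineg ε ⊆ Icc (-Bval ε) (-1) := fun i hi => by
    obtain ⟨hi, hneg⟩ := mem_filter.1 hi
    exact mem_Icc.2 ⟨(mem_Iset.1 hi).1.1, by omega⟩
  have h := card_le_card hsub
  rw [Int.card_Icc] at h
  have : ((Ineg ε).card : ℤ) ≤ Bval ε := by omega
  exact_mod_cast this

lemma neg_one_mem_Ineg {ε : ℝ} (hB : 1 ≤ Bval ε) : (-1 : ℤ) ∈ Ineg ε :=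
  mem_filter.2 ⟨mem_Iset.2 ⟨⟨by omega, by omega⟩, -1, by ring⟩, by norm_num⟩

noncomputable def Wweight (i : ℤ) : ℝ := if i < 0 then 2 ^ i else 1

lemma Wweight_of_neg {i : ℤ} (hi : i < 0) : Wweight i = 2 ^ i := if_pos hi

lemma Wweight_of_pos {i : ℤ} (hi : 0 < i) : Wweight i = 1 := if_neg (by omega)

lemma Wweight_le_one (i : ℤ) : Wweight i ≤ 1 := by
  unfold Wweight
  split_ifs with hi
  · exact zpow_le_one_of_nonpos₀ (by norm_num) hi.le
  · exact le_rfl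

lemma Wweight_le_zpow {i j : ℤ} (hij : i ≤ j) (hj : j < 0) : Wweight i ≤ 2 ^ j := by
  rw [Wweight_of_neg (hij.trans_lt hj)]
  exact zpow_le_zpow_right₀ (by norm_num) hij

lemma Wfun_eq_sum_Wweight {ε : ℝ} (P : MProcess ε) (t : ℕ) :
    Wfun ε P t = ∑ i ∈ Iset ε, Wweight i * P.p t i := by
  rw [sum_Iset_eq_sum_Ineg_add_sum_Ipos, Wfun]
  congr 1 <;> refine sum_congr rfl fun i hi => ?_
  · rw [Wweight_of_neg (mem_filter.1 hi).2]
  · rw [Wweight_of_pos (mem_filter.1 hi).2, one_mul]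

namespace MProcess

variable {ε : ℝ} (P : MProcess ε)

lemma p_nonneg (t : ℕ) (i : ℤ) : 0 ≤ P.p t i := (P.q_nonneg t i).trans (P.q_le_p t i)

lemma sum_mul_p_succ {t : ℕ} (ht : 1 ≤ t) (w : ℤ → ℝ) :
    ∑ i ∈ Iset ε, w i * P.p (t + 1) i =
      ∑ j ∈ Iset ε, (w (max (j - 2) (-Bval ε)) * P.q t j +
        w (min (j + 2) (Bval ε)) * (P.p t j - P.q t j)) := by
  rw [sum_add_distrib,
    ← sum_fiberwise_of_maps_to (fun j hj => max_sub_two_mem_Iset hj)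
      fun j => w (max (j - 2) (-Bval ε)) * P.q t j,
    ← sum_fiberwise_of_maps_to (fun j hj => min_add_two_mem_Iset hj)
      fun j => w (min (j + 2) (Bval ε)) * (P.p t j - P.q t j), ← sum_add_distrib]
  refine sum_congr rfl fun i hi => ?_
  rw [P.update t ht i hi, mul_add, mul_sum, mul_sum]
  congr 1 <;> exact sum_congr rfl fun j hj => by rw [(mem_filter.1 hj).2]

lemma sum_p_eq_one (h1 : ∑ i ∈ Iset ε, P.p 1 i = 1) {t : ℕ} (ht : 1 ≤ t) :
    ∑ i ∈ Iset ε, P.p t i = 1 := by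
  induction t, ht using Nat.le_induction with
  | base => exact h1
  | succ n hn ih =>
    have h := P.sum_mul_p_succ hn fun _ => 1
    simp only [one_mul, add_sub_cancel] at h
    rw [h, ih]

lemma p_le_one (h1 : ∑ i ∈ Iset ε, P.p 1 i = 1) {t : ℕ} (ht : 1 ≤ t) {i : ℤ} (hi : i ∈ Iset ε) :
    P.p t i ≤ 1 :=
  P.sum_p_eq_one h1 ht ▸ single_le_sum (fun j _ => P.p_nonneg t j) hi

noncomputable def pushedWeight (t : ℕ) (j : ℤ) : ℝ :=
  Wweight (max (j - 2) (-Bval ε)) * P.q t j +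
    Wweight (min (j + 2) (Bval ε)) * (P.p t j - P.q t j)

lemma Wfun_succ_eq_sum_pushedWeight {t : ℕ} (ht : 1 ≤ t) :
    Wfun ε P (t + 1) = ∑ j ∈ Iset ε, P.pushedWeight t j := by
  rw [Wfun_eq_sum_Wweight, P.sum_mul_p_succ ht]
  rfl

lemma pushedWeight_le_p (t : ℕ) (j : ℤ) : P.pushedWeight t j ≤ P.p t j := by
  have h1 := mul_le_mul_of_nonneg_right (Wweight_le_one (max (j - 2) (-Bval ε))) (P.q_nonneg t j)
  have h2 := mul_le_mul_of_nonneg_right (Wweight_le_one (min (j + 2) (Bval ε)))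
    (sub_nonneg.2 (P.q_le_p t j))
  rw [pushedWeight]
  linarith

lemma pushedWeight_neg_one_le {t : ℕ} (hB : 3 ≤ Bval ε)
    (hup : P.p t (-1) - P.q t (-1) ≤ 1 / 16 * P.p t (-1)) :
    P.pushedWeight t (-1) ≤ 3 / 16 * P.p t (-1) := by
  rw [pushedWeight, max_eq_left (by omega), min_eq_left (by omega), Wweight_of_neg (by norm_num),
    Wweight_of_pos (by norm_num)]
  norm_num
  linarith [P.q_le_p t (-1)]

lemma pushedWeight_le_four_mul {t : ℕ} {j : ℤ} (hBj : -Bval ε ≤ j) (hj : j ≤ -3) :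
    P.pushedWeight t j ≤ 4 * (2 ^ j * P.p t j) := by
  have hmax : Wweight (max (j - 2) (-Bval ε)) ≤ 2 ^ j :=
    Wweight_le_zpow (max_le (by omega) hBj) (by omega)
  have hmin : Wweight (min (j + 2) (Bval ε)) = 4 * 2 ^ j := by
    rw [min_eq_left (by omega), Wweight_of_neg (by omega), zpow_add₀ two_ne_zero]
    norm_num [mul_comm]
  have hx : (0 : ℝ) < 2 ^ j := by positivity
  rw [pushedWeight, hmin]
  nlinarith [mul_le_mul_of_nonneg_right hmax (P.q_nonneg t j), P.q_le_p t j, P.q_nonneg t j]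

lemma pushedWeight_le_half {t : ℕ} {j : ℤ} (hBj : -Bval ε ≤ j - 2) (hj : j ≤ -3)
    (hup : P.p t j - P.q t j ≤ 1 / 16 * P.p t j) :
    P.pushedWeight t j ≤ 1 / 2 * (2 ^ j * P.p t j) := by
  have hmax : Wweight (max (j - 2) (-Bval ε)) = 1 / 4 * 2 ^ j := by
    rw [max_eq_left hBj, Wweight_of_neg (by omega), sub_eq_add_neg, zpow_add₀ two_ne_zero]
    norm_num [mul_comm]
  have hmin : Wweight (min (j + 2) (Bval ε)) = 4 * 2 ^ j := by
    rw [min_eq_left (by omega), Wweight_of_neg (by omega), zpow_add₀ two_ne_zero]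
    norm_num [mul_comm]
  have hx : (0 : ℝ) < 2 ^ j := by positivity
  rw [pushedWeight, hmax, hmin]
  nlinarith [mul_le_mul_of_nonneg_left hup hx.le, mul_le_mul_of_nonneg_left (P.q_le_p t j) hx.le]

lemma pushedWeight_le_of_mem_erase {t : ℕ} (ht : 1 ≤ t) {j : ℤ} (hj : j ∈ (Ineg ε).erase (-1))
    (hp : P.p t j ≤ 1) :
    P.pushedWeight t j ≤ 1 / 2 * (2 ^ j * P.p t j) +
      1 / (2 * (Bval ε : ℝ) ^ 4) * ∑ i ∈ Ipos ε, P.p t i +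
      if j = -Bval ε then 4 * 2 ^ (-Bval ε) else 0 := by
  obtain ⟨hj1, hjneg⟩ := mem_erase.1 hj
  obtain ⟨hjI, hj0⟩ := mem_filter.1 hjneg
  obtain ⟨⟨hBj, -⟩, m, hm⟩ := mem_Iset.1 hjI
  -- `j` and `-B` are both odd, so `j ≠ -B` gives `-B ≤ j - 2`.
  obtain ⟨k, hk⟩ := Bval_odd ε
  have hj3 : j ≤ -3 := by omega
  have hx : (0 : ℝ) < 2 ^ j := by positivity
  have hS : 0 ≤ 1 / (2 * (Bval ε : ℝ) ^ 4) * ∑ i ∈ Ipos ε, P.p t i :=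
    mul_nonneg (by positivity) (sum_nonneg fun i _ => P.p_nonneg t i)
  have hfour := P.pushedWeight_le_four_mul (t := t) hBj hj3
  have hp0 := P.p_nonneg t j
  split_ifs with hjB
  · rw [← hjB]
    nlinarith [mul_le_mul_of_nonneg_left hp hx.le]
  · by_cases hheavy : 1 / (Bval ε : ℝ) ^ 4 * ∑ i ∈ Ipos ε, P.p t i ≤ P.p t j
    · have := P.pushedWeight_le_half (by omega) hj3 (P.up_small t ht j hjneg hheavy)
      linarith
    · have hx8 : (2 : ℝ) ^ j ≤ 1 / 8 :=
        (zpow_le_zpow_right₀ (by norm_num) hj3).trans_eq (by norm_num)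
      have hhalf : 1 / (2 * (Bval ε : ℝ) ^ 4) = 1 / 2 * (1 / (Bval ε : ℝ) ^ 4) := by ring
      rw [hhalf]
      nlinarith [mul_le_mul_of_nonneg_right hx8 hp0]

lemma sum_erase_pushedWeight_le (h1 : ∑ i ∈ Iset ε, P.p 1 i = 1) {t : ℕ} (ht : 1 ≤ t)
    (hB : 1 ≤ Bval ε) :
    ∑ j ∈ (Ineg ε).erase (-1), P.pushedWeight t j ≤
      1 / 2 * (∑ i ∈ Ineg ε, 2 ^ i * P.p t i - 1 / 2 * P.p t (-1)) +
        1 / (2 * (Bval ε : ℝ) ^ 3) * ∑ i ∈ Ipos ε, P.p t i + 4 * 2 ^ (-Bval ε) := by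
  have hm1 := neg_one_mem_Ineg hB
  set S := ∑ i ∈ Ipos ε, P.p t i
  have hS : 0 ≤ S := sum_nonneg fun i _ => P.p_nonneg t i
  have hN : ∑ i ∈ (Ineg ε).erase (-1), (2 : ℝ) ^ i * P.p t i =
      ∑ i ∈ Ineg ε, 2 ^ i * P.p t i - 1 / 2 * P.p t (-1) := by
    rw [← sum_erase_add _ _ hm1]
    norm_num
  have hcard : (((Ineg ε).erase (-1)).card : ℝ) * (1 / (2 * (Bval ε : ℝ) ^ 4) * S) ≤
      1 / (2 * (Bval ε : ℝ) ^ 3) * S := by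
    have hc : (((Ineg ε).erase (-1)).card : ℝ) ≤ Bval ε :=
      (Nat.cast_le.2 (card_erase_le)).trans (card_Ineg_le (by omega))
    calc _ ≤ (Bval ε : ℝ) * (1 / (2 * (Bval ε : ℝ) ^ 4) * S) :=
          mul_le_mul_of_nonneg_right hc (mul_nonneg (by positivity) hS)
      _ = _ := by field_simp
  have hite : ∑ j ∈ (Ineg ε).erase (-1),
      (if j = -Bval ε then 4 * (2 : ℝ) ^ (-Bval ε) else 0) ≤ 4 * 2 ^ (-Bval ε) := by
    rw [sum_ite_eq']
    split_ifs
    · exact le_rfl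
    · positivity
  calc _ ≤ ∑ j ∈ (Ineg ε).erase (-1), (1 / 2 * (2 ^ j * P.p t j) +
        1 / (2 * (Bval ε : ℝ) ^ 4) * S + if j = -Bval ε then 4 * 2 ^ (-Bval ε) else 0) :=
        sum_le_sum fun j hj => P.pushedWeight_le_of_mem_erase ht hj
          (P.p_le_one h1 ht (mem_filter.1 (mem_of_mem_erase hj)).1)
    _ = 1 / 2 * ∑ j ∈ (Ineg ε).erase (-1), 2 ^ j * P.p t j +
        (((Ineg ε).erase (-1)).card : ℝ) * (1 / (2 * (Bval ε : ℝ) ^ 4) * S) +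
        ∑ j ∈ (Ineg ε).erase (-1), (if j = -Bval ε then 4 * (2 : ℝ) ^ (-Bval ε) else 0) := by
      rw [sum_add_distrib, sum_add_distrib, sum_const, nsmul_eq_mul, ← mul_sum]
    _ ≤ _ := by
      rw [hN]
      linarith

end MProcess

lemma contraction_arith {N S x b ε : ℝ} (hN : 0 ≤ N) (hS : 0 ≤ S) (hb : 13 ≤ b)
    (hε0 : 0 ≤ ε) (hε : ε < 1 / 32) (hx : 8 * S ≤ b * x) (hW : 16 * ε * b ≤ N + S) :
    1 / 2 * (N - 1 / 2 * x) + 1 / (2 * b ^ 3) * S + 2 * ε ^ 2 + 3 / 16 * x + S ≤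
      (1 - 1 / (9 * b)) * (N + S) := by
  have hb0 : 0 < b := by linarith
  have hxS : S / (2 * b) ≤ x / 16 := by rw [div_le_iff₀ (by positivity)]; linarith
  have hε2 : 2 * ε ^ 2 ≤ (N + S) / (256 * b) := by rw [le_div_iff₀ (by positivity)]; nlinarith
  have hS3 : 1 / (2 * b ^ 3) * S ≤ S / (338 * b) := by
    rw [one_div_mul_eq_div, div_le_div_iff₀ (by positivity) (by positivity)]
    nlinarith [mul_le_mul_of_nonneg_left (show 169 ≤ b ^ 2 by nlinarith) (mul_nonneg hS hb0.le)]
  have hNb : N / (9 * b) + N / (256 * b) ≤ N / 2 := by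
    rw [div_add_div _ _ (by positivity) (by positivity), div_le_div_iff₀ (by positivity) (by norm_num)]
    nlinarith [mul_nonneg (mul_nonneg hN hb0.le) (by linarith : (0 : ℝ) ≤ b - 13)]
  have hSb : S / (9 * b) + S / (338 * b) + S / (256 * b) ≤ S / (2 * b) := by
    field_simp
    nlinarith
  have hexp : (1 - 1 / (9 * b)) * (N + S) = N + S - N / (9 * b) - S / (9 * b) := by
    field_simp
    ring
  rw [hexp]
  have : (N + S) / (256 * b) = N / (256 * b) + S / (256 * b) := add_div _ _ _
  linarith

/-- Case 1 of the proof of Lemma 3: if at step `t` the mass `δ_{-,+}^t`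
moving from `-1` to `+1` is at least `(1/(2B_ε)) Σ_{j ∈ I_ε⁺} p_j^t` and `W_t ≥ 16 ε B_ε`, then
`W_{t+1} ≤ (1 - 1/(9B_ε)) W_t`. -/
theorem stmt2 :
    ∀ ε : ℝ, ε ∈ Set.Ioo (0 : ℝ) (1 / 32) →
      ∀ P : MProcess ε, (∑ i ∈ Iset ε, P.p 1 i) = 1 →
        ∀ t : ℕ, 1 ≤ t →
          (1 / (2 * (Bval ε : ℝ))) * (∑ j ∈ Ipos ε, P.p t j) ≤ P.p t (-1) - P.q t (-1) →
          16 * ε * (Bval ε : ℝ) ≤ Wfun ε P t →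
          Wfun ε P (t + 1) ≤ (1 - 1 / (9 * (Bval ε : ℝ))) * Wfun ε P t := by
  intro ε ⟨hε0, hε⟩ P h1 t ht hδ hW
  have hB := thirteen_le_Bval hε0 hε
  have hb : (13 : ℝ) ≤ Bval ε := by exact_mod_cast hB
  have hm1 := neg_one_mem_Ineg (by omega : 1 ≤ Bval ε)
  set S := ∑ j ∈ Ipos ε, P.p t j
  have hS : 0 ≤ S := sum_nonneg fun i _ => P.p_nonneg t i
  have hN : 0 ≤ ∑ i ∈ Ineg ε, (2 : ℝ) ^ i * P.p t i :=
    sum_nonneg fun i _ => mul_nonneg (by positivity) (P.p_nonneg t i)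
  have hheavy : 1 / (Bval ε : ℝ) ^ 4 * S ≤ P.p t (-1) := by
    have : 1 / (Bval ε : ℝ) ^ 4 ≤ 1 / (2 * Bval ε) :=
      one_div_le_one_div_of_le (by positivity)
        (by nlinarith [pow_le_pow_left₀ (by norm_num) hb 3])
    nlinarith [P.q_nonneg t (-1)]
  have hup := P.up_small t ht (-1) hm1 hheavy
  have hx : 8 * S ≤ Bval ε * P.p t (-1) := by
    have := hδ.trans hup
    rw [one_div_mul_eq_div, div_le_iff₀ (by positivity)] at this
    linarith
  calc Wfun ε P (t + 1) = ∑ j ∈ (Ineg ε).erase (-1), P.pushedWeight t j +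
        P.pushedWeight t (-1) + ∑ j ∈ Ipos ε, P.pushedWeight t j := by
        rw [P.Wfun_succ_eq_sum_pushedWeight ht, sum_Iset_eq_sum_Ineg_add_sum_Ipos,
          sum_erase_add _ _ hm1]
    _ ≤ 1 / 2 * (∑ i ∈ Ineg ε, 2 ^ i * P.p t i - 1 / 2 * P.p t (-1)) +
          1 / (2 * (Bval ε : ℝ) ^ 3) * S + 4 * 2 ^ (-Bval ε) + 3 / 16 * P.p t (-1) + S :=
      add_le_add (add_le_add (P.sum_erase_pushedWeight_le h1 ht (by omega))
        (P.pushedWeight_neg_one_le (by omega) hup)) (sum_le_sum fun j _ => P.pushedWeight_le_p t j)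
    _ ≤ 1 / 2 * (∑ i ∈ Ineg ε, 2 ^ i * P.p t i - 1 / 2 * P.p t (-1)) +
          1 / (2 * (Bval ε : ℝ) ^ 3) * S + 2 * ε ^ 2 + 3 / 16 * P.p t (-1) + S := by
      linarith [two_zpow_neg_Bval_le hε0]
    _ ≤ (1 - 1 / (9 * (Bval ε : ℝ))) * Wfun ε P t := contraction_arith hN hS hb hε0.le hε hx hW
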